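/- arXiv:cond-mat/9704175 — 2 statements merged into one kernel-verified Lean document; each statement's English description precedes it below -/
import Mathlib

section
/- The function Φ(x,y) := (-1/(27|x|y²))·(2(1+3y)^{3/2} - sgn(x)(2+9y)), defined for x > 0 and 0 < y < 1/3, is monotonically increasing in y, and satisfies the expansion Φ(x,y) = (-1/(4x))(1 - y/2 + O(y²)) as y → 0⁺. -/
open Real Asymptotics Filter Set

/-! With s = √(1 + 3y) the function becomes rational: 2s³ - (2 + 9y) = (s - 1)²(2s + 1) and
9y² = (s - 1)²(s + 1)², so Φ(x, y) = -(2s + 1) / (3x(s + 1)²). Since (2s + 1)/(s + 1)²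
decreases for s ≥ 0, Φ increases in y, and Φ minus its first two Taylor terms is
-3y²(s² + 4s + 1)/(8x(s + 1)⁴), whose cofactor of y²/x lies in [-1, 0]. -/

noncomputable def Phi (x y : ℝ) : ℝ :=
  (-1 / (27 * x * y ^ 2)) * (2 * (1 + 3 * y) ^ ((3:ℝ)/2) - (2 + 9 * y))

lemma rpow_three_halves {a : ℝ} (ha : 0 ≤ a) : a ^ ((3:ℝ)/2) = √a ^ 3 := by
  rw [rpow_div_two_eq_sqrt _ ha]
  norm_cast

lemma strictAntiOn_two_mul_add_one_div_sq :
    StrictAntiOn (fun s : ℝ => (2 * s + 1) / (s + 1) ^ 2) (Ici 0) := by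
  intro a (ha : 0 ≤ a) b _ hab
  have hb : 0 < b := ha.trans_lt hab
  rw [div_lt_div_iff₀ (by positivity) (by positivity)]
  -- (2a + 1)(b + 1)² - (2b + 1)(a + 1)² = (b - a)(2ab + a + b)
  nlinarith [mul_pos (sub_pos.2 hab) (show 0 < 2 * a * b + a + b by positivity)]

lemma abs_div_sq_le_one {s : ℝ} (hs : 0 ≤ s) :
    |3 * (s ^ 2 + 4 * s + 1) / (8 * (s + 1) ^ 4)| ≤ 1 := by
  rw [abs_of_nonneg (by positivity), div_le_one (by positivity)]
  have h : 1 ≤ (s + 1) ^ 2 := by nlinarith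
  nlinarith [mul_le_mul_of_nonneg_left h (by positivity : (0:ℝ) ≤ (s + 1) ^ 2)]

section

variable {x y : ℝ}

lemma Phi_eq (hy : 0 < y) :
    Phi x y = -((2 * √(1 + 3 * y) + 1) / (√(1 + 3 * y) + 1) ^ 2) / (3 * x) := by
  have hs : √(1 + 3 * y) ^ 2 = 1 + 3 * y := sq_sqrt (by linarith)
  have hs1 : 1 < √(1 + 3 * y) := by nlinarith [sqrt_nonneg (1 + 3 * y)]
  rw [Phi, rpow_three_halves (by linarith)]
  set s := √(1 + 3 * y)
  have hnum : 2 * s ^ 3 - (2 + 9 * y) = (s - 1) ^ 2 * (2 * s + 1) := by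
    linear_combination 3 * hs
  have hy2 : y ^ 2 = (s - 1) ^ 2 * (s + 1) ^ 2 / 9 := by
    linear_combination (-(s ^ 2 - 1 + 3 * y) / 9) * hs
  have : s - 1 ≠ 0 := by linarith
  have : s + 1 ≠ 0 := by linarith
  rw [hnum, hy2]
  field_simp
  ring

theorem Phi_strictMonoOn (hx : 0 < x) : StrictMonoOn (Phi x) (Ioi 0) := by
  intro a (ha : 0 < a) b (hb : 0 < b) hab
  rw [Phi_eq ha, Phi_eq hb]
  gcongr ?_ / _
  exact neg_lt_neg <| strictAntiOn_two_mul_add_one_div_sq (sqrt_nonneg _) (sqrt_nonneg _)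
    (sqrt_lt_sqrt (by linarith) (by linarith))

lemma Phi_sub_eq (hy : 0 < y) :
    Phi x y - (-1 / (4 * x)) * (1 - y / 2) =
      -(y ^ 2 / x *
        (3 * (√(1 + 3 * y) ^ 2 + 4 * √(1 + 3 * y) + 1) / (8 * (√(1 + 3 * y) + 1) ^ 4))) := by
  have hs : √(1 + 3 * y) ^ 2 = 1 + 3 * y := sq_sqrt (by linarith)
  have hs0 := sqrt_nonneg (1 + 3 * y)
  rw [Phi_eq hy]
  set s := √(1 + 3 * y)
  have : s + 1 ≠ 0 := by linarith
  rw [show y = (s ^ 2 - 1) / 3 by linarith]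
  field_simp
  ring

theorem Phi_sub_isBigO : (fun y => Phi x y - (-1 / (4 * x)) * (1 - y / 2))
    =O[nhdsWithin 0 (Ioi 0)] (fun y => y ^ 2) := by
  refine IsBigO.of_bound (1 / |x|) <| eventually_mem_nhdsWithin.mono fun y (hy : 0 < y) => ?_
  rw [Phi_sub_eq hy, norm_neg, norm_mul]
  refine (mul_le_of_le_one_right (norm_nonneg _) (abs_div_sq_le_one (sqrt_nonneg _))).trans_eq ?_
  rw [norm_div, Real.norm_eq_abs x]
  ring

end

/-- The function Φ(x,y) = (-1/(27xy²))(2(1+3y)^{3/2} - (2+9y)) for x > 0 is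
monotonically increasing in y on (0,1/3), and Φ(x,y) = (-1/(4x))(1 - y/2) + O(y²)
as y → 0⁺. -/
theorem Phi_monotone_and_expansion (x : ℝ) (hx : 0 < x) :
    (∀ y₁ ∈ Ioo (0:ℝ) (1/3), ∀ y₂ ∈ Ioo (0:ℝ) (1/3), y₁ < y₂ →
      (-1 / (27 * x * y₁ ^ 2)) * (2 * (1 + 3 * y₁) ^ ((3:ℝ)/2) - (2 + 9 * y₁))
        < (-1 / (27 * x * y₂ ^ 2)) * (2 * (1 + 3 * y₂) ^ ((3:ℝ)/2) - (2 + 9 * y₂))) ∧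
    (fun y : ℝ =>
        (-1 / (27 * x * y ^ 2)) * (2 * (1 + 3 * y) ^ ((3:ℝ)/2) - (2 + 9 * y))
          - (-1 / (4 * x)) * (1 - y / 2))
      =O[nhdsWithin 0 (Ioi 0)] (fun y : ℝ => y ^ 2) :=
  ⟨fun _ hy₁ _ hy₂ h => Phi_strictMonoOn hx hy₁.1 hy₂.1 h, Phi_sub_isBigO⟩
end

section
/- Define f(ν) = arcsinh(ν/√3) + (ν/6)√(3+ν²) + (ν³/(6√3)) log(ν/(√3 + √(3+ν²))) for ν > 0. Then f is strictly increasing on (0,∞), f(ν) → 0 as ν → 0⁺, and f(ν) → ∞ as ν → ∞; hence for each λ > 0 the equation 1/λ = f(ν) has a unique solution ν > 0. -/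
/-!
Since `log (ν / (√3 + √(3 + ν²))) = -arsinh (√3 / ν)`, on `(0, ∞)` we have
`f ν = arsinh (ν / √3) + ν √(3 + ν²) / 6 - ν³ arsinh (√3 / ν) / (6√3)`, and everything follows
from `0 ≤ x arsinh (a / x) < a` for `a, x > 0`. The last term lies in `[0, ν² / 6]`, so it
vanishes at `0⁺` and is dominated by `ν √(3 + ν²) / 6`, giving `f ν ≥ arsinh (ν / √3) → ∞`.
The derivative collapses to `√(3 + ν²) / 2 - ν² arsinh (√3 / ν) / (2√3)`, which by the same
bound exceeds `(√(3 + ν²) - ν) / 2 > 0`. A continuous strictly increasing function on `(0, ∞)`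
running from `0` to `∞` takes every positive value exactly once.
-/

open Real Filter Set Topology

noncomputable def gapFunction (ν : ℝ) : ℝ :=
  arsinh (ν / √3) + ν / 6 * √(3 + ν ^ 2) + ν ^ 3 / (6 * √3) * log (ν / (√3 + √(3 + ν ^ 2)))

noncomputable def gapArsinh (ν : ℝ) : ℝ :=
  arsinh (ν / √3) + ν / 6 * √(3 + ν ^ 2) - ν ^ 3 / (6 * √3) * arsinh (√3 / ν)

noncomputable def gapArsinhDeriv (ν : ℝ) : ℝ :=
  √(3 + ν ^ 2) / 2 - ν ^ 2 / (2 * √3) * arsinh (√3 / ν)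

lemma Real.arsinh_lt_self {x : ℝ} (hx : 0 < x) : arsinh x < x := by
  simpa only [arsinh_sinh] using arsinh_lt_arsinh.2 (self_lt_sinh_iff.2 hx)

lemma Real.tendsto_arsinh_atTop : Tendsto arsinh atTop atTop :=
  tendsto_atTop_atTop_of_monotone arsinh_strictMono.monotone fun b => ⟨sinh b, (arsinh_sinh b).ge⟩

lemma mul_arsinh_div_lt {a x : ℝ} (ha : 0 < a) (hx : 0 < x) : x * arsinh (a / x) < a := by
  calc x * arsinh (a / x) < x * (a / x) := by gcongr; exact arsinh_lt_self (by positivity)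
    _ = a := by field_simp

lemma sqrt_one_add_div_sq {a : ℝ} (ha : 0 < a) (b : ℝ) :
    √(1 + (b / a) ^ 2) = √(a ^ 2 + b ^ 2) / a := by
  rw [div_pow, one_add_div (by positivity), sqrt_div' _ (sq_nonneg a), sqrt_sq ha.le]

lemma log_div_add_sqrt_eq_neg_arsinh (a : ℝ) {x : ℝ} (hx : 0 < x) :
    log (x / (a + √(a ^ 2 + x ^ 2))) = -arsinh (a / x) := by
  rw [arsinh, sqrt_one_add_div_sq hx, add_comm (x ^ 2), ← add_div, ← log_inv, inv_div]

lemma eqOn_gapFunction_gapArsinh : EqOn gapFunction gapArsinh (Ioi 0) := by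
  intro ν (hν : 0 < ν)
  have h := log_div_add_sqrt_eq_neg_arsinh (√3) hν
  rw [sq_sqrt zero_le_three] at h
  rw [gapFunction, gapArsinh, h]
  ring

lemma hasDerivAt_arsinh_div_const {a : ℝ} (ha : 0 < a) (x : ℝ) :
    HasDerivAt (fun x => arsinh (x / a)) (√(a ^ 2 + x ^ 2))⁻¹ x := by
  convert ((hasDerivAt_id' x).div_const a).arsinh using 1
  rw [sqrt_one_add_div_sq ha, smul_eq_mul]
  field_simp

lemma hasDerivAt_arsinh_const_div (a : ℝ) {x : ℝ} (hx : 0 < x) :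
    HasDerivAt (fun x => arsinh (a / x)) (-a / (x * √(a ^ 2 + x ^ 2))) x := by
  have h : HasDerivAt (fun x => a / x) (a * -(x ^ 2)⁻¹) x := by
    simpa only [div_eq_mul_inv] using (hasDerivAt_inv hx.ne').const_mul a
  convert h.arsinh using 1
  rw [sqrt_one_add_div_sq hx, add_comm (x ^ 2), smul_eq_mul]
  field_simp

lemma hasDerivAt_gapArsinh {ν : ℝ} (hν : 0 < ν) : HasDerivAt gapArsinh (gapArsinhDeriv ν) ν := by
  have h3 : √3 ^ 2 = 3 := sq_sqrt zero_le_three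
  have hs : √(3 + ν ^ 2) ^ 2 = 3 + ν ^ 2 := sq_sqrt (by positivity)
  have hsqrt : HasDerivAt (fun x => √(3 + x ^ 2)) (2 * ν / (2 * √(3 + ν ^ 2))) ν := by
    simpa using ((hasDerivAt_pow 2 ν).const_add 3).sqrt (by positivity)
  refine (((hasDerivAt_arsinh_div_const (sqrt_pos.2 three_pos) ν).add
    (((hasDerivAt_id' ν).div_const 6).mul hsqrt)).sub
    (((hasDerivAt_pow 3 ν).div_const (6 * √3)).mul
      (hasDerivAt_arsinh_const_div (√3) hν))).congr_deriv ?_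
  rw [gapArsinhDeriv, h3]
  field_simp
  push_cast
  linear_combination (-4 * √3) * hs

lemma cube_mul_arsinh_mem_Icc {ν : ℝ} (hν : 0 < ν) :
    ν ^ 3 / (6 * √3) * arsinh (√3 / ν) ∈ Icc 0 (ν ^ 2 / 6) := by
  constructor
  · exact mul_nonneg (by positivity) (arsinh_nonneg_iff.2 (by positivity))
  · calc ν ^ 3 / (6 * √3) * arsinh (√3 / ν) = ν ^ 2 / (6 * √3) * (ν * arsinh (√3 / ν)) := by ring
      _ ≤ ν ^ 2 / (6 * √3) * √3 := by gcongr; exact (mul_arsinh_div_lt (by positivity) hν).le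
      _ = ν ^ 2 / 6 := by field_simp

lemma gapArsinhDeriv_pos {ν : ℝ} (hν : 0 < ν) : 0 < gapArsinhDeriv ν := by
  have hlt : ν < √(3 + ν ^ 2) := lt_sqrt_of_sq_lt (by linarith)
  have hrem : ν ^ 2 / (2 * √3) * arsinh (√3 / ν) < ν / 2 :=
    calc ν ^ 2 / (2 * √3) * arsinh (√3 / ν) = ν / (2 * √3) * (ν * arsinh (√3 / ν)) := by ring
      _ < ν / (2 * √3) * √3 := by gcongr; exact mul_arsinh_div_lt (by positivity) hν
      _ = ν / 2 := by field_simp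
  rw [gapArsinhDeriv]
  linarith

lemma continuousOn_gapArsinh : ContinuousOn gapArsinh (Ioi 0) :=
  fun _ hν => (hasDerivAt_gapArsinh hν).continuousAt.continuousWithinAt

lemma strictMonoOn_gapArsinh : StrictMonoOn gapArsinh (Ioi 0) :=
  strictMonoOn_of_deriv_pos (convex_Ioi 0) continuousOn_gapArsinh fun ν hν => by
    rw [interior_Ioi] at hν
    rw [(hasDerivAt_gapArsinh hν).deriv]
    exact gapArsinhDeriv_pos hν

lemma tendsto_gapArsinh_nhdsGT_zero : Tendsto gapArsinh (𝓝[>] 0) (𝓝 0) := by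
  unfold gapArsinh
  have hmain : Tendsto (fun ν : ℝ => arsinh (ν / √3) + ν / 6 * √(3 + ν ^ 2)) (𝓝[>] 0) (𝓝 0) := by
    have hc : Continuous fun ν : ℝ => arsinh (ν / √3) + ν / 6 * √(3 + ν ^ 2) :=
      (continuous_id.div_const _).arsinh.add
        ((continuous_id.div_const 6).mul (continuous_const.add (continuous_pow 2)).sqrt)
    simpa using (hc.tendsto 0).mono_left nhdsWithin_le_nhds
  have hrem : Tendsto (fun ν : ℝ => ν ^ 3 / (6 * √3) * arsinh (√3 / ν)) (𝓝[>] 0) (𝓝 0) := by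
    have hsq : Tendsto (fun ν : ℝ => ν ^ 2 / 6) (𝓝[>] 0) (𝓝 0) := by
      have hc : Continuous fun ν : ℝ => ν ^ 2 / 6 := by fun_prop
      simpa using (hc.tendsto 0).mono_left nhdsWithin_le_nhds
    refine tendsto_of_tendsto_of_tendsto_of_le_of_le' tendsto_const_nhds hsq ?_ ?_ <;>
      filter_upwards [self_mem_nhdsWithin] with ν hν
    exacts [(cube_mul_arsinh_mem_Icc hν).1, (cube_mul_arsinh_mem_Icc hν).2]
  simpa only [sub_zero] using hmain.sub hrem

lemma arsinh_div_sqrt_three_le_gapArsinh {ν : ℝ} (hν : 0 < ν) :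
    arsinh (ν / √3) ≤ gapArsinh ν := by
  have hle : ν ≤ √(3 + ν ^ 2) := le_sqrt_of_sq_le (by linarith)
  have hprod : ν ^ 2 / 6 ≤ ν / 6 * √(3 + ν ^ 2) :=
    calc ν ^ 2 / 6 = ν / 6 * ν := by ring
      _ ≤ ν / 6 * √(3 + ν ^ 2) := by gcongr
  rw [gapArsinh]
  linarith [(cube_mul_arsinh_mem_Icc hν).2]

lemma tendsto_gapArsinh_atTop : Tendsto gapArsinh atTop atTop :=
  tendsto_atTop_mono' atTop ((eventually_gt_atTop 0).mono fun _ => arsinh_div_sqrt_three_le_gapArsinh)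
    (tendsto_arsinh_atTop.comp (tendsto_id.atTop_div_const (sqrt_pos.2 three_pos)))

lemma StrictMonoOn.existsUnique_eq_of_tendsto {f : ℝ → ℝ} {a b y : ℝ}
    (hmono : StrictMonoOn f (Ioi a)) (hcont : ContinuousOn f (Ioi a))
    (hleft : Tendsto f (𝓝[>] a) (𝓝 b)) (hright : Tendsto f atTop atTop) (hy : b < y) :
    ∃! x, a < x ∧ f x = y := by
  obtain ⟨x, hx, rfl⟩ := isPreconnected_Ioi.intermediate_value_Ioi
    (le_principal_iff.2 self_mem_nhdsWithin) (le_principal_iff.2 (Ioi_mem_atTop a)) hcont hleft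
    hright hy
  exact ⟨x, ⟨hx, rfl⟩, fun x' ⟨hx', he⟩ => hmono.injOn hx' hx he⟩

/-- The exact T = 0 gap equation for the (0,0,1) state of Γ₄⁻ of O_h:
f(ν) = arcsinh(ν/√3) + (ν/6)√(3+ν²) + (ν³/(6√3))log(ν/(√3+√(3+ν²))) is
strictly increasing on (0,∞), tends to 0 at 0⁺ and to ∞ at ∞, hence
1/λ = f(ν) has a unique solution ν > 0 for each λ > 0. -/
theorem exact_gap_equation_001 :
    StrictMonoOn (fun ν : ℝ =>
        Real.arsinh (ν / Real.sqrt 3) + ν / 6 * Real.sqrt (3 + ν ^ 2)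
          + ν ^ 3 / (6 * Real.sqrt 3)
            * Real.log (ν / (Real.sqrt 3 + Real.sqrt (3 + ν ^ 2))))
      (Ioi 0) ∧
    Tendsto (fun ν : ℝ =>
        Real.arsinh (ν / Real.sqrt 3) + ν / 6 * Real.sqrt (3 + ν ^ 2)
          + ν ^ 3 / (6 * Real.sqrt 3)
            * Real.log (ν / (Real.sqrt 3 + Real.sqrt (3 + ν ^ 2))))
      (nhdsWithin 0 (Ioi 0)) (nhds 0) ∧
    Tendsto (fun ν : ℝ =>
        Real.arsinh (ν / Real.sqrt 3) + ν / 6 * Real.sqrt (3 + ν ^ 2)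
          + ν ^ 3 / (6 * Real.sqrt 3)
            * Real.log (ν / (Real.sqrt 3 + Real.sqrt (3 + ν ^ 2))))
      atTop atTop ∧
    (∀ lam : ℝ, 0 < lam → ∃! ν : ℝ, 0 < ν ∧
      Real.arsinh (ν / Real.sqrt 3) + ν / 6 * Real.sqrt (3 + ν ^ 2)
        + ν ^ 3 / (6 * Real.sqrt 3)
          * Real.log (ν / (Real.sqrt 3 + Real.sqrt (3 + ν ^ 2)))
        = 1 / lam) := by
  have hEq := eqOn_gapFunction_gapArsinh
  have hmono : StrictMonoOn gapFunction (Ioi 0) := strictMonoOn_gapArsinh.congr hEq.symm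
  have hcont : ContinuousOn gapFunction (Ioi 0) := continuousOn_gapArsinh.congr hEq
  have hzero : Tendsto gapFunction (𝓝[>] 0) (𝓝 0) :=
    tendsto_gapArsinh_nhdsGT_zero.congr' (eventuallyEq_nhdsWithin_of_eqOn hEq.symm)
  have htop : Tendsto gapFunction atTop atTop :=
    tendsto_gapArsinh_atTop.congr' (hEq.symm.eventuallyEq_of_mem (Ioi_mem_atTop 0))
  exact ⟨hmono, hzero, htop, fun lam hlam =>
    hmono.existsUnique_eq_of_tendsto hcont hzero htop (by positivity)⟩
end
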